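/- arXiv:1307.5094 — 2 statements merged into one kernel-verified Lean document; each statement's English description precedes it below -/
import Mathlib

section
/- For every positive integer n, there exists a double-n string with diameter at most 5⌈n/13⌉ - 1; consequently δ(n) ≤ 5⌈n/13⌉ - 1. -/
/-- A double-`n` string: a sequence of length `2n` over `n` symbols in which
each symbol appears exactly twice. -/
def IsDoubleString (n : ℕ) (s : Fin (2 * n) → Fin n) : Prop :=
  ∀ a : Fin n, (Finset.univ.filter (fun i => s i = a)).card = 2

/-- The diameter of the string `s` is at most `d`: every pair of distinct
symbols has a pair of occurrences at positional distance at most `d`. -/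
def DiamLE (n d : ℕ) (s : Fin (2 * n) → Fin n) : Prop :=
  ∀ a b : Fin n, a ≠ b →
    ∃ i j : Fin (2 * n), s i = a ∧ s j = b ∧ Nat.dist i.val j.val ≤ d

/-- `delta n` : the minimum diameter over all double-`n` strings. -/
noncomputable def delta (n : ℕ) : ℕ :=
  sInf {d | ∃ s : Fin (2 * n) → Fin n, IsDoubleString n s ∧ DiamLE n d s}

/-! Blow up each symbol `c` of a double-13 string into the block of symbols `x < n` with
`x / k = c`; for `n ≤ 13 k` this is a double-`n` string. Two symbols are at distance at most `d`
exactly when they lie in a common window of `d + 1` consecutive letters, and a window of `5`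
letters of the base string (diameter `4`) becomes a window of at most `5 k` letters. -/

open List

section Window

variable {α : Type*}

def InWindow (m : ℕ) (l : List α) (x y : α) : Prop :=
  ∃ w, w <:+: l ∧ w.length ≤ m ∧ x ∈ w ∧ y ∈ w

theorem inWindow_of_mem_take_drop {l : List α} {x y : α} (i m : ℕ)
    (hx : x ∈ (l.drop i).take m) (hy : y ∈ (l.drop i).take m) : InWindow m l x y :=
  ⟨_, (take_prefix m _).isInfix.trans (drop_suffix i l).isInfix, length_take_le _ _, hx, hy⟩

theorem InWindow.flatMap {β : Type*} {l : List α} {f : α → List β} {m k : ℕ} {a b : α}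
    {x y : β} (h : InWindow m l a b) (hf : ∀ c, (f c).length ≤ k) (hx : x ∈ f a)
    (hy : y ∈ f b) : InWindow (m * k) (l.flatMap f) x y := by
  obtain ⟨w, hw, hlen, ha, hb⟩ := h
  refine ⟨w.flatMap f, hw.flatMap f, ?_, mem_flatMap.2 ⟨a, ha, hx⟩, mem_flatMap.2 ⟨b, hb, hy⟩⟩
  calc (w.flatMap f).length = (w.map fun c => (f c).length).sum := length_flatMap
    _ ≤ w.length * k := by
      simpa using sum_le_card_nsmul (w.map fun c => (f c).length) k (by simp [hf])
    _ ≤ m * k := Nat.mul_le_mul_right k hlen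

theorem InWindow.exists_dist_lt {l : List α} {m : ℕ} {x y : α} (h : InWindow m l x y) :
    ∃ i j : Fin l.length, l.get i = x ∧ l.get j = y ∧ Nat.dist i j < m := by
  obtain ⟨w, ⟨s, t, rfl⟩, hlen, hx, hy⟩ := h
  obtain ⟨a, ha, rfl⟩ := getElem_of_mem hx
  obtain ⟨b, hb, rfl⟩ := getElem_of_mem hy
  refine ⟨⟨s.length + a, by simp; omega⟩, ⟨s.length + b, by simp; omega⟩, ?_, ?_, ?_⟩
  · simp [getElem_append_left, getElem_append_right, ha]
  · simp [getElem_append_left, getElem_append_right, hb]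
  · change Nat.dist (s.length + a) (s.length + b) < m
    unfold Nat.dist
    omega

end Window

def block (n k c : ℕ) : List (Fin n) := (finRange n).filter fun x => x.val / k = c

def blowUp (n k : ℕ) (B : List ℕ) : List (Fin n) := B.flatMap (block n k)

section BlowUp

variable {n k : ℕ}

theorem mem_block {c : ℕ} {x : Fin n} : x ∈ block n k c ↔ x.val / k = c := by
  simp [block]

theorem count_block (c : ℕ) (x : Fin n) :
    (block n k c).count x = if c = x.val / k then 1 else 0 := by
  split_ifs with h
  · exact count_eq_one_of_mem ((nodup_finRange n).filter _) (mem_block.2 h.symm)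
  · exact count_eq_zero_of_not_mem fun hx => h (mem_block.1 hx).symm

theorem length_block_le (hk : 0 < k) (c : ℕ) : (block n k c).length ≤ k := by
  have hsub : (block n k c).map Fin.val ⊆ range' (k * c) k := by
    intro y hy
    obtain ⟨x, hx, rfl⟩ := mem_map.1 hy
    have hdiv := mem_block.1 hx
    have := Nat.div_add_mod x.val k
    have := Nat.mod_lt x.val hk
    rw [mem_range'_1]
    subst hdiv
    omega
  have := ((((nodup_finRange n).filter _).map Fin.val_injective).subperm hsub).length_le
  rwa [length_map, length_range'] at this

theorem count_blowUp (B : List ℕ) (x : Fin n) :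
    (blowUp n k B).count x = B.count (x.val / k) := by
  induction B with
  | nil => simp [blowUp]
  | cons c B ih =>
    simp only [blowUp, flatMap_cons, count_append, count_cons, count_block] at ih ⊢
    rw [ih, add_comm]
    simp only [beq_iff_eq]

theorem count_blowUp_eq_two {m : ℕ} {B : List ℕ} (hB : ∀ c < m, B.count c = 2) (hk : 0 < k)
    (hnk : n ≤ m * k) (x : Fin n) : (blowUp n k B).count x = 2 := by
  rw [count_blowUp]
  exact hB _ ((Nat.div_lt_iff_lt_mul hk).2 (by omega))

theorem inWindow_blowUp {m w : ℕ} {B : List ℕ} (hB : ∀ a < m, ∀ b < m, InWindow w B a b)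
    (hk : 0 < k) (hnk : n ≤ m * k) (x y : Fin n) : InWindow (w * k) (blowUp n k B) x y :=
  have hlt (z : Fin n) : z.val / k < m := (Nat.div_lt_iff_lt_mul hk).2 (by omega)
  (hB _ (hlt x) _ (hlt y)).flatMap (length_block_le hk) (mem_block.2 rfl) (mem_block.2 rfl)

end BlowUp

section FromList

variable {n : ℕ} {l : List (Fin n)}

theorem length_eq_of_count_eq_two (h : ∀ a, l.count a = 2) : l.length = 2 * n := by
  have := Multiset.sum_count_eq_card (s := Finset.univ) (m := (l : Multiset (Fin n))) (by simp)
  simpa [h, mul_comm] using this.symm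

theorem isDoubleString_get (hl : l.length = 2 * n) (h : ∀ a, l.count a = 2) :
    IsDoubleString n fun i => l.get (i.cast hl.symm) := fun a =>
  (Fin.card_filter_univ_eq_vector_get_eq_count a ⟨l, hl⟩).trans (h a)

theorem diamLE_get {d : ℕ} (hl : l.length = 2 * n) (h : ∀ a b, a ≠ b → InWindow (d + 1) l a b) :
    DiamLE n d fun i => l.get (i.cast hl.symm) := by
  intro a b hab
  obtain ⟨i, j, hi, hj, hij⟩ := (h a b hab).exists_dist_lt
  exact ⟨i.cast hl, j.cast hl, hi, hj, Nat.lt_succ_iff.1 hij⟩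

end FromList

-- The paper's double-13 string of diameter 4, with symbols shifted down by one.
def base13 : List ℕ :=
  [0, 1, 2, 3, 4, 5, 6, 7, 8, 9, 0, 10, 5, 11, 12, 4, 3, 6, 10, 9, 8, 1, 2, 12, 11, 7]

theorem count_base13 : ∀ c < 13, base13.count c = 2 := by decide

theorem inWindow_base13 : ∀ a < 13, ∀ b < 13, InWindow 5 base13 a b := by
  have : ∀ a < 13, ∀ b < 13, ∃ i < 22,
      a ∈ (base13.drop i).take 5 ∧ b ∈ (base13.drop i).take 5 := by decide
  intro a ha b hb
  obtain ⟨i, -, hai, hbi⟩ := this a ha b hb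
  exact inWindow_of_mem_take_drop i 5 hai hbi

/-- For every positive integer `n` there exists a double-`n` string with
diameter at most `5⌈n/13⌉ - 1`; consequently `δ(n) ≤ 5⌈n/13⌉ - 1`.  (Here
`⌈n/13⌉ = (n + 12) / 13` in natural-number arithmetic.) -/
theorem delta_upper_bound (n : ℕ) (hn : 0 < n) :
    (∃ s : Fin (2 * n) → Fin n,
        IsDoubleString n s ∧ DiamLE n (5 * ((n + 12) / 13) - 1) s) ∧
    delta n ≤ 5 * ((n + 12) / 13) - 1 := by
  set k := (n + 12) / 13
  have hk : 0 < k := by omega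
  have hnk : n ≤ 13 * k := by omega
  have hcount := count_blowUp_eq_two count_base13 hk hnk
  have hl := length_eq_of_count_eq_two hcount
  have hwin : ∀ x y, x ≠ y → InWindow (5 * k - 1 + 1) (blowUp n k base13) x y := by
    rw [Nat.sub_add_cancel (by omega)]
    exact fun x y _ => inWindow_blowUp inWindow_base13 hk hnk x y
  have hs := And.intro (isDoubleString_get hl hcount) (diamLE_get hl hwin)
  exact ⟨⟨_, hs⟩, Nat.sInf_le ⟨_, hs⟩⟩
end

section
/- There is no double-8 string with diameter at most 2; equivalently, δ(8) ≥ 3, so any double-interval society on 8 voters arising from a double-8 string has approval number at least 4. -/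
/-!
Let `a` be the first symbol of a double-`n` string of diameter `d`, with second occurrence at
position `q`. Every other symbol has an occurrence within distance `d` of position `0` or of `q`;
there are at most `d` such positions besides `0` and at most `2d` besides `q`, so
`n - 1 ≤ 3d`. For `n = 8` this forces `d ≥ 3`.
-/

open Finset

namespace IsDoubleString

variable {n : ℕ} {s : Fin (2 * n) → Fin n}

theorem exists_mate (hs : IsDoubleString n s) (p : Fin (2 * n)) :
    ∃ q, ∀ i, s i = s p ↔ i = p ∨ i = q := by
  obtain ⟨x, y, -, hpair⟩ := card_eq_two.mp (hs (s p))
  have hocc : ∀ i, s i = s p ↔ i = x ∨ i = y := fun i => by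
    simpa using Finset.ext_iff.mp hpair i
  rcases (hocc p).mp rfl with rfl | rfl
  · exact ⟨y, hocc⟩
  · exact ⟨x, fun i => (hocc i).trans or_comm⟩

theorem diamLE_two_mul (hs : IsDoubleString n s) : DiamLE n (2 * n) s := by
  intro a b _
  obtain ⟨i, hi⟩ := card_pos.mp ((hs a).symm ▸ two_pos)
  obtain ⟨j, hj⟩ := card_pos.mp ((hs b).symm ▸ two_pos)
  refine ⟨i, j, (mem_filter.mp hi).2, (mem_filter.mp hj).2, ?_⟩
  unfold Nat.dist
  omega

theorem le_three_mul_add_one {d : ℕ} (hs : IsDoubleString n s) (hd : DiamLE n d s) :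
    n ≤ 3 * d + 1 := by
  rcases Nat.eq_zero_or_pos n with rfl | hn
  · omega
  let p : Fin (2 * n) := ⟨0, by omega⟩
  obtain ⟨q, hmate⟩ := hs.exists_mate p
  let T := univ.filter fun j : Fin (2 * n) => s j ≠ s p ∧ (j.val ≤ d ∨ Nat.dist j q ≤ d)
  have hcover : univ.erase (s p) ⊆ T.image s := by
    intro b hb
    obtain ⟨i, j, hi, hj, hij⟩ := hd (s p) b (Ne.symm (mem_erase.mp hb).1)
    refine mem_image.mpr ⟨j, mem_filter.mpr ⟨mem_univ j, hj ▸ (mem_erase.mp hb).1, ?_⟩, hj⟩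
    rcases (hmate i).mp hi with rfl | rfl
    · left; simpa [p, Nat.dist] using hij
    · right; rwa [Nat.dist_comm]
  have hT : T.card ≤ 3 * d := by
    have hmaps : ∀ j ∈ T, j.val ∈ Ioc 0 d ∪ (Icc (q.val - d) (q.val + d)).erase q.val := by
      intro j hj
      obtain ⟨-, hjp, hnear⟩ := mem_filter.mp hj
      have hj0 : j.val ≠ 0 := fun h => hjp (congrArg s (Fin.ext h))
      have hjq : j.val ≠ q.val := fun h => hjp ((hmate j).mpr (.inr (Fin.ext h)))
      simp only [mem_union, mem_Ioc, mem_erase, mem_Icc]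
      unfold Nat.dist at hnear
      omega
    have hball : ((Icc (q.val - d) (q.val + d)).erase q.val).card ≤ 2 * d := by
      rw [card_erase_of_mem (mem_Icc.mpr ⟨Nat.sub_le _ _, Nat.le_add_right _ _⟩), Nat.card_Icc]
      omega
    calc T.card ≤ (Ioc 0 d ∪ (Icc (q.val - d) (q.val + d)).erase q.val).card :=
          card_le_card_of_injOn Fin.val hmaps Fin.val_injective.injOn
      _ ≤ (Ioc 0 d).card + ((Icc (q.val - d) (q.val + d)).erase q.val).card := card_union_le _ _
      _ ≤ 3 * d := by rw [Nat.card_Ioc]; omega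
  have hsymbols : n - 1 ≤ T.card :=
    calc n - 1 = (univ.erase (s p)).card := by simp
      _ ≤ (T.image s).card := card_le_card hcover
      _ ≤ T.card := card_image_le
  omega

end IsDoubleString

theorem exists_isDoubleString (n : ℕ) : ∃ s : Fin (2 * n) → Fin n, IsDoubleString n s := by
  refine ⟨fun i => ⟨i.val / 2, by omega⟩, fun a => ?_⟩
  have hpair : univ.filter (fun i : Fin (2 * n) => (⟨i.val / 2, by omega⟩ : Fin n) = a) =
      {⟨2 * a.val, by omega⟩, ⟨2 * a.val + 1, by omega⟩} := by
    ext i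
    simp only [mem_filter, mem_univ, true_and, mem_insert, mem_singleton, Fin.ext_iff]
    omega
  rw [hpair, card_pair (by simp [Fin.ext_iff])]

theorem exists_isDoubleString_diamLE_delta (n : ℕ) :
    ∃ s : Fin (2 * n) → Fin n, IsDoubleString n s ∧ DiamLE n (delta n) s := by
  obtain ⟨s, hs⟩ := exists_isDoubleString n
  exact Nat.sInf_mem (s := {d | ∃ s : Fin (2 * n) → Fin n, IsDoubleString n s ∧ DiamLE n d s})
    ⟨2 * n, s, hs, hs.diamLE_two_mul⟩

theorem le_three_mul_delta_add_one (n : ℕ) : n ≤ 3 * delta n + 1 := by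
  obtain ⟨s, hs, hd⟩ := exists_isDoubleString_diamLE_delta n
  exact hs.le_three_mul_add_one hd

/-- There is no double-8 string with diameter at most 2; equivalently
`δ(8) ≥ 3`. -/
theorem no_double_eight_diameter_two :
    (∀ s : Fin (2 * 8) → Fin 8, IsDoubleString 8 s → ¬ DiamLE 8 2 s) ∧
    3 ≤ delta 8 := by
  refine ⟨fun s hs hd => ?_, ?_⟩
  · have := hs.le_three_mul_add_one hd
    omega
  · have := le_three_mul_delta_add_one 8
    omega
end
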